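/- arXiv:2006.06492 — 5 statements merged into one kernel-verified Lean document; each statement's English description precedes it below -/
import Mathlib

section
/- For integers m ≥ n ≥ 0 with m ≥ 1, ∏_{i=0}^{n-1} (2^m - 2^i)/(2^m - 1) ≥ 1 - 2^{n-m}. -/
lemma weierstrass_aux (a : ℕ → ℝ) (n : ℕ) (h0 : ∀ i ∈ Finset.range n, 0 ≤ a i)
    (h1 : ∀ i ∈ Finset.range n, a i ≤ 1) :
    1 - ∑ i ∈ Finset.range n, a i ≤ ∏ i ∈ Finset.range n, (1 - a i) := by
  induction n with
  | zero => simp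
  | succ n ih =>
    have h0' : ∀ i ∈ Finset.range n, 0 ≤ a i := fun i hi =>
      h0 i (Finset.mem_range.mpr (Nat.lt_succ_of_lt (Finset.mem_range.mp hi)))
    have h1' : ∀ i ∈ Finset.range n, a i ≤ 1 := fun i hi =>
      h1 i (Finset.mem_range.mpr (Nat.lt_succ_of_lt (Finset.mem_range.mp hi)))
    have han0 : 0 ≤ a n := h0 n (Finset.mem_range.mpr (Nat.lt_succ_self n))
    have han1 : a n ≤ 1 := h1 n (Finset.mem_range.mpr (Nat.lt_succ_self n))
    rw [Finset.prod_range_succ, Finset.sum_range_succ]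
    have hS : 0 ≤ ∑ i ∈ Finset.range n, a i := Finset.sum_nonneg h0'
    calc 1 - (∑ i ∈ Finset.range n, a i + a n)
        ≤ (1 - ∑ i ∈ Finset.range n, a i) * (1 - a n) := by nlinarith
      _ ≤ (∏ i ∈ Finset.range n, (1 - a i)) * (1 - a n) := by
          apply mul_le_mul_of_nonneg_right (ih h0' h1') (by linarith)

/-- For integers `m ≥ n ≥ 0` with `m ≥ 1`,
`∏_{i=0}^{n-1} (2^m - 2^i)/(2^m - 1) ≥ 1 - 2^{n-m}`. -/
theorem prod_no_zero_col_ge (m n : ℕ) (hm : 1 ≤ m) (hmn : n ≤ m) :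
    (1 : ℝ) - (2 : ℝ) ^ ((n : ℤ) - (m : ℤ))
      ≤ ∏ i ∈ Finset.range n, ((2 : ℝ) ^ m - 2 ^ i) / ((2 : ℝ) ^ m - 1) := by
  have h2m : (2 : ℝ) ≤ 2 ^ m := by
    calc (2:ℝ) = 2^1 := (pow_one 2).symm
    _ ≤ 2^m := by exact pow_le_pow_right₀ (by norm_num) hm
  have hden : (0 : ℝ) < 2 ^ m - 1 := by linarith
  set a : ℕ → ℝ := fun i => ((2:ℝ)^i - 1) / ((2:ℝ)^m - 1) with ha
  have hprod : ∏ i ∈ Finset.range n, ((2 : ℝ) ^ m - 2 ^ i) / ((2 : ℝ) ^ m - 1)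
      = ∏ i ∈ Finset.range n, (1 - a i) := by
    apply Finset.prod_congr rfl
    intro i _
    simp only [ha]
    rw [one_sub_div hden.ne']
    ring
  rw [hprod]
  have h0 : ∀ i ∈ Finset.range n, 0 ≤ a i := by
    intro i _
    apply div_nonneg _ hden.le
    have : (1:ℝ) ≤ 2^i := one_le_pow₀ (by norm_num)
    linarith
  have h1 : ∀ i ∈ Finset.range n, a i ≤ 1 := by
    intro i hi
    rw [ha, div_le_one hden]
    have : (2:ℝ)^i ≤ 2^m := pow_le_pow_right₀ (by norm_num) (le_trans (Finset.mem_range.mp hi).le hmn)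
    linarith
  refine le_trans ?_ (weierstrass_aux a n h0 h1)
  have hsum : ∑ i ∈ Finset.range n, a i = ((2:ℝ)^n - 1 - n) / ((2:ℝ)^m - 1) := by
    rw [ha, ← Finset.sum_div]
    congr 1
    rw [Finset.sum_sub_distrib, geom_sum_eq (by norm_num : (2:ℝ) ≠ 1)]
    simp
    ring
  rw [hsum]
  have hz : (2:ℝ) ^ ((n:ℤ) - (m:ℤ)) = 2^n / 2^m := by
    rw [zpow_sub₀ (by norm_num), zpow_natCast, zpow_natCast]
  rw [hz]
  have h2nm : (2:ℝ)^n ≤ 2^m := pow_le_pow_right₀ (by norm_num) hmn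
  have hn0 : (0:ℝ) ≤ n := Nat.cast_nonneg n
  have hpm : (0:ℝ) < 2^m := by positivity
  rw [sub_le_sub_iff_left, div_le_div_iff₀ hden hpm]
  nlinarith
end

section
/- Let n ≤ r ≤ n + l with p_0 ∈ (0,1] satisfying p_0 > (1-p_0)/(2^l - 1). Define p_e = ((1-p_0)·2^{r-n-1}/(2^l-1)) / (p_0 + (1-p_0)(2^{r-n}-1)/(2^l-1)). Then p_e ≤ (1-p_0)·2^{l-1}/(2^l - 1) < 1/2. -/
/-- For `n ≤ r ≤ n + l` with `p₀ > (1-p₀)/(2^l - 1)`, the probability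
`p_e = ((1-p₀)·2^{r-n-1}/(2^l-1)) / (p₀ + (1-p₀)(2^{r-n}-1)/(2^l-1))` satisfies
`p_e ≤ (1-p₀)·2^{l-1}/(2^l - 1) < 1/2`. -/
theorem pe_lt_half (n r l : ℕ) (hl : 1 ≤ l) (hnr : n ≤ r) (hrl : r ≤ n + l)
    (p₀ : ℝ) (hp₀ : 0 < p₀) (hp₁ : p₀ ≤ 1)
    (hmax : (1 - p₀) / ((2 : ℝ) ^ l - 1) < p₀)
    (pe : ℝ)
    (hpe : pe = ((1 - p₀) * (2 : ℝ) ^ ((r : ℤ) - (n : ℤ) - 1) / ((2 : ℝ) ^ l - 1))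
        / (p₀ + (1 - p₀) * ((2 : ℝ) ^ (r - n) - 1) / ((2 : ℝ) ^ l - 1))) :
    pe ≤ (1 - p₀) * (2 : ℝ) ^ ((l : ℤ) - 1) / ((2 : ℝ) ^ l - 1)
    ∧ (1 - p₀) * (2 : ℝ) ^ ((l : ℤ) - 1) / ((2 : ℝ) ^ l - 1) < 1 / 2 := by
  have h2l : (2:ℝ) ≤ 2 ^ l := by
    calc (2:ℝ) = 2 ^ 1 := (pow_one 2).symm
    _ ≤ 2 ^ l := pow_le_pow_right₀ one_le_two hl
  have hA : (0:ℝ) < 2 ^ l - 1 := by linarith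
  have hk : (r:ℤ) - (n:ℤ) - 1 = ((r - n : ℕ) : ℤ) - 1 := by omega
  have hkl : r - n ≤ l := by omega
  have hzr : (2:ℝ) ^ ((r:ℤ) - (n:ℤ) - 1) = 2 ^ (r - n) / 2 := by
    rw [hk, zpow_sub₀ (two_ne_zero), zpow_natCast, zpow_one]
  have hzl : (2:ℝ) ^ ((l:ℤ) - 1) = 2 ^ l / 2 := by
    rw [zpow_sub₀ (two_ne_zero), zpow_natCast, zpow_one]
  have h2k : (2:ℝ) ^ (r - n) ≤ 2 ^ l := pow_le_pow_right₀ one_le_two hkl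
  have h2k1 : (1:ℝ) ≤ 2 ^ (r - n) := one_le_pow₀ one_le_two
  have hq0 : (0:ℝ) ≤ 1 - p₀ := by linarith
  have hm : 1 - p₀ < p₀ * (2 ^ l - 1) := (div_lt_iff₀ hA).mp hmax
  have hD : 0 < p₀ + (1 - p₀) * ((2 : ℝ) ^ (r - n) - 1) / ((2 : ℝ) ^ l - 1) := by
    have : 0 ≤ (1 - p₀) * ((2 : ℝ) ^ (r - n) - 1) / ((2 : ℝ) ^ l - 1) := by
      apply div_nonneg _ (le_of_lt hA)
      exact mul_nonneg hq0 (by linarith)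
    linarith
  constructor
  · rw [hpe, hzr, hzl, div_le_iff₀ hD, div_mul_eq_mul_div, div_le_div_iff₀ hA hA]
    have key : (0:ℝ) ≤ (2 ^ l * p₀ - 1) * (2 ^ l - 2 ^ (r - n)) := by
      apply mul_nonneg _ (by linarith)
      nlinarith
    have hAne : ((2:ℝ) ^ l - 1) ≠ 0 := ne_of_gt hA
    field_simp
    nlinarith [mul_nonneg hq0 key, mul_nonneg hq0 (mul_nonneg hq0 (sub_nonneg.mpr h2k1))]
  · rw [hzl, div_lt_iff₀ hA]
    nlinarith
end

section
/- Define f(h) = (1 - 2^{n-i+h})(1 - 2^{-h})^n for real h ∈ [0, i-n], where i ≥ n ≥ 1 are integers. Let ĥ = log₂(√((n-1)² + n·2^{i-n+2}) - n + 1) - 1. Then f is nondecreasing on [0, ĥ] ∩ [0, i-n] and nonincreasing on [ĥ, i-n] ∩ [0, i-n]; in particular, max over integers h ∈ {0,...,i-n} of f(h) is attained at h ∈ {⌊ĥ⌋, ⌈ĥ⌉} (intersected with [0, i-n]). -/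
/-- The function `f(h) = (1 - 2^{n-i+h})(1 - 2^{-h})^n` is nondecreasing on `[0, ĥ]` and
nonincreasing on `[ĥ, i-n]`, where
`ĥ = log₂(√((n-1)² + n·2^{i-n+2}) - n + 1) - 1`; in particular its maximum over integers
`h ∈ {0, …, i-n}` is attained at `⌊ĥ⌋` or `⌈ĥ⌉` (clamped to `[0, i-n]`). -/
theorem f_unimodal (n i : ℕ) (hn : 1 ≤ n) (hni : n ≤ i)
    (f : ℝ → ℝ)
    (hf : f = fun h : ℝ => (1 - (2 : ℝ) ^ ((n : ℝ) - (i : ℝ) + h)) * (1 - (2 : ℝ) ^ (-h)) ^ n)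
    (hhat : ℝ)
    (hhat_def : hhat = Real.logb 2
        (Real.sqrt (((n : ℝ) - 1) ^ 2 + (n : ℝ) * 2 ^ (i - n + 2)) - (n : ℝ) + 1) - 1) :
    MonotoneOn f (Set.Icc 0 hhat ∩ Set.Icc 0 ((i : ℝ) - (n : ℝ)))
    ∧ AntitoneOn f (Set.Icc hhat ((i : ℝ) - (n : ℝ)) ∩ Set.Icc 0 ((i : ℝ) - (n : ℝ)))
    ∧ ∀ h : ℕ, h ≤ i - n →
        f h ≤ max (f (max 0 (min ((⌊hhat⌋ : ℝ)) ((i : ℝ) - (n : ℝ)))))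
                  (f (max 0 (min ((⌈hhat⌉ : ℝ)) ((i : ℝ) - (n : ℝ))))) := by
  have h2 : (1 : ℝ) < 2 := one_lt_two
  have hn1 : (1 : ℝ) ≤ (n : ℝ) := by exact_mod_cast hn
  have hniR : (n : ℝ) ≤ (i : ℝ) := by exact_mod_cast hni
  set D : ℝ := (i : ℝ) - (n : ℝ) with hDdef
  have hD0 : 0 ≤ D := by simp [hDdef]; linarith
  set c : ℝ := (2 : ℝ) ^ ((n : ℝ) - (i : ℝ)) with hcdef
  have hc0 : 0 < c := Real.rpow_pos_of_pos two_pos _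
  have hc1 : c ≤ 1 := Real.rpow_le_one_of_one_le_of_nonpos h2.le (by linarith)
  -- the power `2^(i-n+2)` equals `4 / c`
  have h4 : c * (2 : ℝ) ^ (i - n + 2) = 4 := by
    have : ((2 : ℝ) ^ (i - n + 2) : ℝ) = (2 : ℝ) ^ (((i - n + 2 : ℕ) : ℝ)) := by
      rw [Real.rpow_natCast]
    rw [this, hcdef, ← Real.rpow_add two_pos]
    have : (n : ℝ) - (i : ℝ) + ((i - n + 2 : ℕ) : ℝ) = 2 := by
      push_cast [Nat.cast_sub hni]
      ring
    rw [this]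
    norm_num
  set Δ : ℝ := ((n : ℝ) - 1) ^ 2 + (n : ℝ) * 2 ^ (i - n + 2) with hΔdef
  have hpowpos : (0 : ℝ) < 2 ^ (i - n + 2) := by positivity
  have hΔpos : 0 < Δ := by
    have : 0 < (n : ℝ) * 2 ^ (i - n + 2) := by positivity
    nlinarith [sq_nonneg ((n : ℝ) - 1)]
  set s : ℝ := Real.sqrt Δ with hsdef
  have hs2 : s ^ 2 = Δ := Real.sq_sqrt hΔpos.le
  have hs_gt : (n : ℝ) - 1 < s := by
    rw [hsdef, Real.lt_sqrt (by linarith : (0:ℝ) ≤ (n:ℝ) - 1)]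
    have : 0 < (n : ℝ) * 2 ^ (i - n + 2) := by positivity
    rw [hΔdef]
    linarith
  set T : ℝ := (s - (n : ℝ) + 1) / 2 with hTdef
  have hT0 : 0 < T := by rw [hTdef]; linarith
  have hs2' : s ^ 2 = ((n : ℝ) - 1) ^ 2 + (n : ℝ) * 2 ^ (i - n + 2) := by
    rw [hs2, hΔdef]
  have hqT : c * T ^ 2 + c * ((n : ℝ) - 1) * T = n := by
    rw [hTdef]
    linear_combination (c / 4) * hs2' + ((n : ℝ) / 4) * h4
  have hT1 : 1 ≤ T := by
    by_contra hlt
    push_neg at hlt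
    have hcn1 : 0 ≤ c * ((n : ℝ) - 1) := mul_nonneg hc0.le (by linarith)
    have hTT : T ^ 2 < T := by rw [sq]; exact mul_lt_of_lt_one_right hT0 hlt
    have ha : c * T ^ 2 < c * T := (mul_lt_mul_iff_right₀ hc0).2 hTT
    have haa : c * T < c := by
      have := (mul_lt_mul_iff_right₀ hc0).2 hlt
      simpa using this
    have hb : c * ((n:ℝ) - 1) * T ≤ c * ((n:ℝ) - 1) := mul_le_of_le_one_right hcn1 hlt.le
    have hcn : c * (n:ℝ) ≤ (n:ℝ) := mul_le_of_le_one_left (by linarith) hc1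
    have hring : c + c * ((n:ℝ) - 1) = c * (n:ℝ) := by ring
    linarith
  have hhatT : hhat = Real.logb 2 T := by
    rw [hhat_def, hTdef]
    rw [Real.logb_div (by linarith) two_ne_zero]
    have : Real.logb 2 2 = 1 := Real.logb_self_eq_one one_lt_two
    rw [this]
  have h2hat : (2 : ℝ) ^ hhat = T := by
    rw [hhatT]; exact Real.rpow_logb two_pos (by norm_num) hT0
  have hhat0 : 0 ≤ hhat := by
    rw [hhatT]; exact Real.logb_nonneg one_lt_two hT1
  -- derivative of f
  have hrpow : ∀ x : ℝ, HasDerivAt (fun y : ℝ => (2 : ℝ) ^ y) ((2:ℝ) ^ x * Real.log 2) x :=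
    fun x => (Real.hasStrictDerivAt_const_rpow two_pos x).hasDerivAt
  have hpow_split : ∀ w : ℝ, w ^ n = w ^ (n - 1) * w := by
    intro w; rw [← pow_succ, Nat.sub_add_cancel hn]
  set E : ℝ → ℝ := fun x => Real.log 2 * ((1 - (2:ℝ) ^ (-x)) ^ (n - 1) *
      ((n : ℝ) * (2:ℝ) ^ (-x) * (1 - (2:ℝ) ^ ((n:ℝ) - (i:ℝ) + x))
        - (2:ℝ) ^ ((n:ℝ) - (i:ℝ) + x) * (1 - (2:ℝ) ^ (-x)))) with hEdef
  have hderiv : ∀ x : ℝ, HasDerivAt f (E x) x := by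
    intro x
    have hu : HasDerivAt (fun y : ℝ => (2 : ℝ) ^ ((n:ℝ) - (i:ℝ) + y))
        ((2:ℝ) ^ ((n:ℝ) - (i:ℝ) + x) * Real.log 2) x := by
      have := (hrpow ((n:ℝ) - (i:ℝ) + x)).comp x
        (((hasDerivAt_id x).const_add ((n:ℝ) - (i:ℝ))))
      simp at this; exact this
    have hv : HasDerivAt (fun y : ℝ => (2 : ℝ) ^ (-y))
        (-((2:ℝ) ^ (-x) * Real.log 2)) x := by
      have := (hrpow (-x)).comp x (hasDerivAt_neg x)
      simp at this; exact this
    have h1 : HasDerivAt (fun y : ℝ => 1 - (2 : ℝ) ^ ((n:ℝ) - (i:ℝ) + y))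
        (-((2:ℝ) ^ ((n:ℝ) - (i:ℝ) + x) * Real.log 2)) x := by
      have := (hasDerivAt_const x (1:ℝ)).sub hu; simp at this; exact this
    have h2' : HasDerivAt (fun y : ℝ => (1 - (2 : ℝ) ^ (-y)) ^ n)
        ((n : ℝ) * (1 - (2:ℝ) ^ (-x)) ^ (n - 1) * ((2:ℝ) ^ (-x) * Real.log 2)) x := by
      have hb : HasDerivAt (fun y : ℝ => 1 - (2 : ℝ) ^ (-y))
          ((2:ℝ) ^ (-x) * Real.log 2) x := by
        have := (hasDerivAt_const x (1:ℝ)).sub hv; simp at this; exact this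
      exact hb.pow n
    have := h1.mul h2'
    rw [hf]
    refine HasDerivAt.congr_deriv this ?_
    rw [hEdef]
    simp only
    rw [hpow_split (1 - (2:ℝ) ^ (-x))]
    ring
  have hfd : ∀ x : ℝ, deriv f x = E x := fun x => (hderiv x).deriv
  have hcontf : Continuous f := by
    have hcont2 : Continuous fun y : ℝ => (2 : ℝ) ^ y :=
      continuous_iff_continuousAt.2 fun y => Real.continuousAt_const_rpow two_ne_zero
    rw [hf]
    exact (continuous_const.sub
        (hcont2.comp (continuous_const.add continuous_id))).mul
      ((continuous_const.sub (hcont2.comp continuous_neg)).pow n)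
  -- key sign computations
  have hvlt : ∀ x : ℝ, 0 < x → (2:ℝ) ^ (-x) < 1 := fun x hx =>
    Real.rpow_lt_one_of_one_lt_of_neg one_lt_two (by linarith)
  have husplit : ∀ x : ℝ, (2:ℝ) ^ ((n:ℝ) - (i:ℝ) + x) = c * (2:ℝ) ^ x := fun x => by
    rw [hcdef, ← Real.rpow_add two_pos]
  have hvinv : ∀ x : ℝ, (2:ℝ) ^ (-x) = ((2:ℝ) ^ x)⁻¹ := fun x =>
    Real.rpow_neg two_pos.le x
  have hEnonneg : ∀ x : ℝ, 0 < x → x ≤ hhat → 0 ≤ E x := by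
    intro x hx hxh
    have ht0 : (0:ℝ) < (2:ℝ) ^ x := Real.rpow_pos_of_pos two_pos x
    set t : ℝ := (2:ℝ) ^ x with htdef
    have htT : t ≤ T := by
      rw [← h2hat, htdef]
      exact Real.rpow_le_rpow_left_iff one_lt_two |>.2 hxh
    have hq : c * t ^ 2 + c * ((n:ℝ) - 1) * t ≤ (n : ℝ) := by
      have h1 : c * t ^ 2 ≤ c * T ^ 2 :=
        mul_le_mul_of_nonneg_left (pow_le_pow_left₀ ht0.le htT 2) hc0.le
      have h2'' : c * ((n:ℝ) - 1) * t ≤ c * ((n:ℝ) - 1) * T :=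
        mul_le_mul_of_nonneg_left htT (mul_nonneg hc0.le (by linarith))
      linarith
    have hv1 : (2:ℝ) ^ (-x) < 1 := hvlt x hx
    rw [hEdef]
    simp only
    rw [husplit, hvinv]
    have hB : 0 ≤ (n : ℝ) * t⁻¹ * (1 - c * t) - c * t * (1 - t⁻¹) := by
      have key : (n : ℝ) * t⁻¹ * (1 - c * t) - c * t * (1 - t⁻¹)
          = ((n : ℝ) - (c * t ^ 2 + c * ((n:ℝ) - 1) * t)) / t := by
        field_simp
        ring
      rw [key]
      exact div_nonneg (by linarith) ht0.le
    have hpos : (0:ℝ) ≤ (1 - ((2:ℝ) ^ x)⁻¹) ^ (n - 1) := by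
      apply pow_nonneg
      rw [hvinv x] at hv1
      linarith
    have hlog : 0 ≤ Real.log 2 := Real.log_nonneg h2.le
    rw [← htdef] at hpos ⊢
    exact mul_nonneg hlog (mul_nonneg hpos hB)
  have hEnonpos : ∀ x : ℝ, 0 < x → hhat ≤ x → E x ≤ 0 := by
    intro x hx hxh
    have ht0 : (0:ℝ) < (2:ℝ) ^ x := Real.rpow_pos_of_pos two_pos x
    set t : ℝ := (2:ℝ) ^ x with htdef
    have htT : T ≤ t := by
      rw [← h2hat, htdef]
      exact Real.rpow_le_rpow_left_iff one_lt_two |>.2 hxh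
    have hq : (n : ℝ) ≤ c * t ^ 2 + c * ((n:ℝ) - 1) * t := by
      have h1 : c * T ^ 2 ≤ c * t ^ 2 :=
        mul_le_mul_of_nonneg_left (pow_le_pow_left₀ hT0.le htT 2) hc0.le
      have h2'' : c * ((n:ℝ) - 1) * T ≤ c * ((n:ℝ) - 1) * t :=
        mul_le_mul_of_nonneg_left htT (mul_nonneg hc0.le (by linarith))
      linarith
    have hv1 : (2:ℝ) ^ (-x) < 1 := hvlt x hx
    rw [hEdef]
    simp only
    rw [husplit, hvinv]
    have hB : (n : ℝ) * t⁻¹ * (1 - c * t) - c * t * (1 - t⁻¹) ≤ 0 := by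
      have key : (n : ℝ) * t⁻¹ * (1 - c * t) - c * t * (1 - t⁻¹)
          = ((n : ℝ) - (c * t ^ 2 + c * ((n:ℝ) - 1) * t)) / t := by
        field_simp
        ring
      rw [key]
      exact div_nonpos_of_nonpos_of_nonneg (by linarith) ht0.le
    have hpos : (0:ℝ) ≤ (1 - ((2:ℝ) ^ x)⁻¹) ^ (n - 1) := by
      apply pow_nonneg
      rw [hvinv x] at hv1
      linarith
    have hlog : 0 ≤ Real.log 2 := Real.log_nonneg h2.le
    rw [← htdef] at hpos ⊢
    exact mul_nonpos_of_nonneg_of_nonpos hlog (mul_nonpos_of_nonneg_of_nonpos hpos hB)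
  -- the two monotonicity statements
  have hdiff : Differentiable ℝ f := fun x => (hderiv x).differentiableAt
  have hmono : MonotoneOn f (Set.Icc 0 hhat ∩ Set.Icc 0 D) := by
    apply monotoneOn_of_deriv_nonneg ((convex_Icc _ _).inter (convex_Icc _ _))
      hcontf.continuousOn hdiff.differentiableOn
    intro x hx
    rw [interior_inter, interior_Icc, interior_Icc] at hx
    obtain ⟨⟨hx0, hxh⟩, _⟩ := hx
    rw [hfd]
    exact hEnonneg x hx0 hxh.le
  have hanti : AntitoneOn f (Set.Icc hhat D ∩ Set.Icc 0 D) := by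
    apply antitoneOn_of_deriv_nonpos ((convex_Icc _ _).inter (convex_Icc _ _))
      hcontf.continuousOn hdiff.differentiableOn
    intro x hx
    rw [interior_inter, interior_Icc, interior_Icc] at hx
    obtain ⟨⟨hxh, _⟩, hx0, _⟩ := hx
    rw [hfd]
    exact hEnonpos x hx0 hxh.le
  refine ⟨hmono, hanti, ?_⟩
  intro h hh
  have hhD : (h : ℝ) ≤ D := by
    have : h + n ≤ i := by omega
    rw [hDdef]
    have : ((h : ℝ) + (n : ℝ)) ≤ (i : ℝ) := by exact_mod_cast this
    linarith
  have hh0 : (0:ℝ) ≤ (h : ℝ) := Nat.cast_nonneg h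
  by_cases hcase : (h : ℝ) ≤ hhat
  · -- use the floor point
    set p : ℝ := max 0 (min ((⌊hhat⌋ : ℝ)) D) with hpdef
    have hfl : (h : ℝ) ≤ ((⌊hhat⌋ : ℝ)) := by
      have : (h : ℤ) ≤ ⌊hhat⌋ := Int.le_floor.2 (by exact_mod_cast hcase)
      exact_mod_cast this
    have hflh : ((⌊hhat⌋ : ℝ)) ≤ hhat := Int.floor_le hhat
    have hhp : (h : ℝ) ≤ p := le_trans (le_min hfl hhD) (le_max_right _ _)
    have hpmem : p ∈ Set.Icc 0 hhat ∩ Set.Icc 0 D := by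
      constructor
      · exact ⟨le_max_left _ _, max_le hhat0 (le_trans (min_le_left _ _) hflh)⟩
      · exact ⟨le_max_left _ _, max_le hD0 (min_le_right _ _)⟩
    have hhmem : (h : ℝ) ∈ Set.Icc 0 hhat ∩ Set.Icc 0 D :=
      ⟨⟨hh0, hcase⟩, ⟨hh0, hhD⟩⟩
    calc f h ≤ f p := hmono hhmem hpmem hhp
      _ ≤ _ := le_max_left _ _
  · -- use the ceiling point
    push_neg at hcase
    set p : ℝ := max 0 (min ((⌈hhat⌉ : ℝ)) D) with hpdef
    have hcl : ((⌈hhat⌉ : ℝ)) ≤ (h : ℝ) := by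
      have : ⌈hhat⌉ ≤ (h : ℤ) := Int.ceil_le.2 (by exact_mod_cast hcase.le)
      exact_mod_cast this
    have hclh : hhat ≤ ((⌈hhat⌉ : ℝ)) := Int.le_ceil hhat
    have hph : p ≤ (h : ℝ) := max_le hh0 (le_trans (min_le_left _ _) hcl)
    have hhhatD : hhat ≤ D := le_trans hcase.le hhD
    have hpmem : p ∈ Set.Icc hhat D ∩ Set.Icc 0 D := by
      constructor
      · refine ⟨le_trans (le_min hclh hhhatD) (le_max_right _ _), max_le hD0 (min_le_right _ _)⟩
      · exact ⟨le_max_left _ _, max_le hD0 (min_le_right _ _)⟩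
    have hhmem : (h : ℝ) ∈ Set.Icc hhat D ∩ Set.Icc 0 D :=
      ⟨⟨hcase.le, hhD⟩, ⟨hh0, hhD⟩⟩
    calc f h ≤ f p := hanti hpmem hhmem hph
      _ ≤ _ := le_max_right _ _
end

section
/- Let m, n, l be positive integers and p_0 ∈ (0,1), and let ε ∈ (0, p_0). Set n(ε) = ⌈(p_0 - ε)m⌉ and assume n(ε) > n and m - n(ε) < l. Then the probability P(E_1, E_3) — that among m received symbols, each independently correct with probability p_0, with correct symbols contributing uniformly random rows of F_2^n (extended by their deterministic parity) and incorrect symbols having independent uniformly random nonzero error patterns in F_2^l, there exist n linearly independent correct symbols (E_1) and the error patterns of the incorrect symbols are linearly independent (E_3) — satisfies P(E_1, E_3) ≥ (1 - e^{-2ε²m})(1 - 2^{n - n(ε)})(1 - 2^{m - n(ε) - l}). -/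
/-- `P_rk(m, n) = ∏_{i=0}^{n-1} (1 - 2^{i-m})`. -/
noncomputable def Prk (m n : ℕ) : ℝ :=
  ∏ i ∈ Finset.range n, (1 - (2 : ℝ) ^ ((i : ℤ) - (m : ℤ)))

/-- `P*_rk(l, k) = ∏_{j=0}^{k-1} (2^l - 2^j)/(2^l - 1)`. -/
noncomputable def PrkStar (l k : ℕ) : ℝ :=
  ∏ j ∈ Finset.range k, ((2 : ℝ) ^ l - 2 ^ j) / ((2 : ℝ) ^ l - 1)

/-- `P(E₁, E₃) = Σ_{i=max(n,m-l)}^m C(m,i) p₀^i (1-p₀)^{m-i} P_rk(i,n) P*_rk(l,m-i)`,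
the probability that the received symbols contain `n` linearly independent correct ones
and that the error patterns of the incorrect ones are linearly independent. -/
noncomputable def PE1E3 (m n l : ℕ) (p₀ : ℝ) : ℝ :=
  ∑ i ∈ Finset.Icc (max n (m - l)) m,
    (m.choose i : ℝ) * p₀ ^ i * (1 - p₀) ^ (m - i) * Prk i n * PrkStar l (m - i)

open Real Finset

lemma weier (n : ℕ) (a : ℕ → ℝ) (h0 : ∀ i, i < n → 0 ≤ a i) (h1 : ∀ i, i < n → a i ≤ 1) :
    1 - ∑ i ∈ Finset.range n, a i ≤ ∏ i ∈ Finset.range n, (1 - a i) := by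
  induction n with
  | zero => simp
  | succ n ih =>
    rw [Finset.sum_range_succ, Finset.prod_range_succ]
    have hs : 0 ≤ ∑ i ∈ Finset.range n, a i :=
      Finset.sum_nonneg fun i hi => h0 i (lt_of_lt_of_le (Finset.mem_range.1 hi) n.le_succ)
    have ih' := ih (fun i hi => h0 i (hi.trans n.lt_succ_self))
      (fun i hi => h1 i (hi.trans n.lt_succ_self))
    nlinarith [h0 n n.lt_succ_self, h1 n n.lt_succ_self]

lemma sum_zpow_le (n : ℕ) (i : ℤ) :
    ∑ j ∈ Finset.range n, (2:ℝ) ^ ((j : ℤ) - i) ≤ (2:ℝ) ^ ((n : ℤ) - i) := by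
  have h2 : (2:ℝ) ≠ 0 := two_ne_zero
  have heq : ∀ j : ℕ, (2:ℝ) ^ ((j : ℤ) - i) = (2:ℝ) ^ j * (2:ℝ) ^ (-i) := by
    intro j
    rw [sub_eq_add_neg, zpow_add₀ h2, zpow_natCast]
  simp_rw [heq]
  rw [← Finset.sum_mul]
  have hgeom : ∑ j ∈ Finset.range n, (2:ℝ) ^ j = 2 ^ n - 1 := by
    rw [geom_sum_eq (by norm_num) n]; norm_num
  rw [hgeom]
  have : (0:ℝ) < (2:ℝ) ^ (-i) := by positivity
  nlinarith
-- Prk i n ≥ 1 - 2^(n - i)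
lemma Prk_ge (i n : ℕ) (h : n ≤ i) : 1 - (2:ℝ) ^ ((n : ℤ) - (i : ℤ)) ≤ Prk i n := by
  unfold Prk
  refine le_trans ?_ (weier n _ ?_ ?_)
  · have := sum_zpow_le n (i : ℤ); linarith
  · intro j _; positivity
  · intro j hj
    apply zpow_le_one_of_nonpos₀ one_le_two
    omega

lemma PrkStar_ge (l k : ℕ) (hl : 0 < l) (hk : k ≤ l) :
    1 - (2:ℝ) ^ ((k : ℤ) - (l : ℤ)) ≤ PrkStar l k := by
  unfold PrkStar
  have hD : (1:ℝ) < 2 ^ l := by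
    have : (2:ℝ) ^ 0 < 2 ^ l := pow_lt_pow_right₀ one_lt_two hl
    simpa using this
  calc 1 - (2:ℝ) ^ ((k : ℤ) - (l : ℤ))
      ≤ ∏ j ∈ Finset.range k, (1 - (2:ℝ) ^ ((j : ℤ) - (l : ℤ))) := by
        refine le_trans ?_ (weier k _ ?_ ?_)
        · have := sum_zpow_le k (l : ℤ); linarith
        · intro j _; positivity
        · intro j hj
          apply zpow_le_one_of_nonpos₀ one_le_two
          omega
    _ ≤ _ := by
        apply Finset.prod_le_prod
        · intro j hj
          have : ((j:ℤ) - (l:ℤ)) ≤ 0 := by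
            have := Finset.mem_range.1 hj; omega
          have := zpow_le_one_of_nonpos₀ (one_le_two (α := ℝ)) this
          linarith
        · intro j hj
          have hj' : j ≤ l := by have := Finset.mem_range.1 hj; omega
          have hjl : (2:ℝ) ^ j ≤ 2 ^ l := pow_le_pow_right₀ one_le_two hj'
          have hzero : (2:ℝ) ^ ((j:ℤ) - (l:ℤ)) = 2 ^ j / 2 ^ l := by
            rw [zpow_sub₀ two_ne_zero, zpow_natCast, zpow_natCast]
          rw [hzero, le_div_iff₀ (by linarith)]
          have hDpos : (0:ℝ) < 2 ^ l := by positivity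
          have hc : (2:ℝ) ^ j / 2 ^ l * 2 ^ l = 2 ^ j := div_mul_cancel₀ _ hDpos.ne'
          have hr1 : (2:ℝ) ^ j / 2 ^ l ≤ 1 := by
            rw [div_le_one hDpos]; exact hjl
          have hr0 : (0:ℝ) ≤ 2 ^ j / 2 ^ l := by positivity
          nlinarith



lemma bernoulli_mgf (p : ℝ) (hp0 : 0 ≤ p) (hp1 : p ≤ 1) (t : ℝ) (ht : 0 ≤ t) :
    (1 - p) + p * exp (-t) ≤ exp (-(t * p) + t ^ 2 / 8) := by
  set q := 1 - p with hq
  have hq0 : 0 ≤ q := by linarith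
  -- g x = q + p * exp (-x) > 0
  set g : ℝ → ℝ := fun x => q + p * exp (-x) with hgdef
  have hgpos : ∀ x, 0 < g x := by
    intro x
    rcases eq_or_lt_of_le hp0 with h | h
    · simp [hgdef, ← h]; linarith
    · have := exp_pos (-x); positivity
  -- h x = -(x*p) + x^2/8 - log (g x)
  set h : ℝ → ℝ := fun x => -(x * p) + x ^ 2 / 8 - log (g x) with hhdef
  set h1 : ℝ → ℝ := fun x => -p + x / 4 + p * exp (-x) / g x with h1def
  have hgd : ∀ x, HasDerivAt g (-(p * exp (-x))) x := by
    intro x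
    have : HasDerivAt (fun x : ℝ => exp (-x)) (exp (-x) * (-1)) x :=
      (hasDerivAt_neg x).exp
    have := ((this.const_mul p).const_add q)
    refine this.congr_deriv ?_
    ring
  have hhd : ∀ x, HasDerivAt h (h1 x) x := by
    intro x
    have hd1 : HasDerivAt (fun x : ℝ => -(x * p) + x ^ 2 / 8)
        (-p + x / 4) x := by
      have : HasDerivAt (fun x : ℝ => -(x * p) + x ^ 2 / 8)
          (-(1 * p) + 2 * x ^ 1 / 8) x := by
        exact (((hasDerivAt_id x).mul_const p).neg).add
          (((hasDerivAt_pow 2 x)).div_const 8)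
      convert this using 1; ring
    have hd2 : HasDerivAt (fun x => log (g x)) (-(p * exp (-x)) / g x) x :=
      (hgd x).log (hgpos x).ne'
    have := hd1.sub hd2
    refine this.congr_deriv ?_
    simp only [h1def]
    ring
  have h1d : ∀ x, HasDerivAt h1 (1 / 4 - q * (p * exp (-x)) / (g x) ^ 2) x := by
    intro x
    have hu : HasDerivAt (fun x : ℝ => p * exp (-x)) (-(p * exp (-x))) x := by
      have : HasDerivAt (fun x : ℝ => exp (-x)) (exp (-x) * (-1)) x :=
        (hasDerivAt_neg x).exp
      refine (this.const_mul p).congr_deriv ?_; ring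
    have hdiv : HasDerivAt (fun x => p * exp (-x) / g x)
        ((-(p * exp (-x)) * g x - p * exp (-x) * (-(p * exp (-x)))) / (g x) ^ 2) x :=
      hu.div (hgd x) (hgpos x).ne'
    have hc : HasDerivAt (fun x : ℝ => -p + x / 4) (1 / 4) x := by
      simpa using ((hasDerivAt_id x).div_const 4).const_add (-p)
    have := hc.add hdiv
    refine this.congr_deriv ?_
    have hg : g x = q + p * exp (-x) := rfl
    field_simp [(hgpos x).ne']
    ring
  -- h1 is monotone
  have h1mono : Monotone h1 := by
    apply monotone_of_deriv_nonneg
    · exact fun x => (h1d x).differentiableAt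
    · intro x
      rw [(h1d x).deriv]
      have hg := hgpos x
      have hgx : g x = q + p * exp (-x) := rfl
      rw [hgx] at hg ⊢
      have he : 0 ≤ p * exp (-x) := by positivity
      have h4 : (0:ℝ) < (q + p * exp (-x)) ^ 2 := by positivity
      rw [sub_nonneg, div_le_div_iff₀ h4 (by norm_num : (0:ℝ) < 4)]
      nlinarith [sq_nonneg (q - p * exp (-x))]
  have h10 : h1 0 = 0 := by
    simp only [h1def]
    have : g 0 = 1 := by simp [hgdef, hq]
    rw [this]; simp
  have h1nonneg : ∀ x, 0 ≤ x → 0 ≤ h1 x := fun x hx => h10 ▸ h1mono hx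
  -- h is monotone on [0, ∞)
  have hmono : MonotoneOn h (Set.Ici (0:ℝ)) := by
    apply monotoneOn_of_deriv_nonneg (convex_Ici 0)
    · exact Continuous.continuousOn (by
        exact continuous_iff_continuousAt.2 fun x => (hhd x).differentiableAt.continuousAt)
    · intro x _
      exact (hhd x).differentiableAt.differentiableWithinAt
    · intro x hx
      rw [(hhd x).deriv]
      exact h1nonneg x (le_of_lt (by simpa using hx))
  have h0 : h 0 = 0 := by
    simp only [hhdef]
    have : g 0 = 1 := by simp [hgdef, hq]
    rw [this]; simp
  have hht : 0 ≤ h t := h0 ▸ hmono (Set.mem_Ici.2 le_rfl) (Set.mem_Ici.2 ht) ht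
  have : log (g t) ≤ -(t * p) + t ^ 2 / 8 := by
    simp only [hhdef] at hht; linarith
  have := (log_le_iff_le_exp (hgpos t)).1 this
  simpa [hgdef, hq] using this


lemma chernoff (m k : ℕ) (p ε : ℝ) (hp0 : 0 ≤ p) (hp1 : p ≤ 1)
    (hε : 0 < ε) (hkm : k ≤ m + 1)
    (hb : ∀ i : ℕ, i < k → (i : ℝ) ≤ (p - ε) * m) :
    ∑ i ∈ Finset.range k, (m.choose i : ℝ) * p ^ i * (1 - p) ^ (m - i)
      ≤ exp (-2 * ε ^ 2 * m) := by
  set t : ℝ := 4 * ε with htdef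
  have ht : 0 < t := by positivity
  have hq : 0 ≤ 1 - p := by linarith
  have step1 : ∑ i ∈ Finset.range k, (m.choose i : ℝ) * p ^ i * (1 - p) ^ (m - i)
      ≤ ∑ i ∈ Finset.range (m+1),
          (m.choose i : ℝ) * p ^ i * (1 - p) ^ (m - i) * exp (t * ((p - ε) * m - i)) := by
    calc ∑ i ∈ Finset.range k, (m.choose i : ℝ) * p ^ i * (1 - p) ^ (m - i)
        ≤ ∑ i ∈ Finset.range k,
            (m.choose i : ℝ) * p ^ i * (1 - p) ^ (m - i) * exp (t * ((p - ε) * m - i)) := by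
          apply Finset.sum_le_sum
          intro i hi
          have hterm : (0:ℝ) ≤ (m.choose i : ℝ) * p ^ i * (1 - p) ^ (m - i) := by positivity
          have hexp : 1 ≤ exp (t * ((p - ε) * m - i)) := by
            apply one_le_exp
            have := hb i (Finset.mem_range.1 hi)
            have : (0:ℝ) ≤ (p - ε) * m - i := by linarith
            positivity
          nlinarith
      _ ≤ _ := by
          apply Finset.sum_le_sum_of_subset_of_nonneg
          · exact Finset.range_subset_range.2 hkm
          · intro i _ _
            positivity
  have step2 : ∑ i ∈ Finset.range (m+1),
      (m.choose i : ℝ) * p ^ i * (1 - p) ^ (m - i) * exp (t * ((p - ε) * m - i))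
      = exp (t * (p - ε) * m) * ((1 - p) + p * exp (-t)) ^ m := by
    rw [add_comm (1-p), add_pow, Finset.mul_sum]
    apply Finset.sum_congr rfl
    intro i hi
    have e1 : exp (t * ((p - ε) * m - i)) = exp (t * (p - ε) * m) * exp (-t) ^ i := by
      rw [← Real.exp_nat_mul, ← Real.exp_add]
      congr 1
      ring
    rw [mul_pow, e1]
    ring
  have step3 : ((1 - p) + p * exp (-t)) ^ m ≤ exp ((m:ℝ) * (-(t * p) + t ^ 2 / 8)) := by
    have hbm := bernoulli_mgf p hp0 hp1 t ht.le
    calc ((1 - p) + p * exp (-t)) ^ m ≤ exp (-(t * p) + t ^ 2 / 8) ^ m :=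
          pow_le_pow_left₀ (by positivity) hbm m
      _ = exp ((m:ℝ) * (-(t * p) + t ^ 2 / 8)) := (Real.exp_nat_mul _ m).symm
  calc ∑ i ∈ Finset.range k, (m.choose i : ℝ) * p ^ i * (1 - p) ^ (m - i)
      ≤ exp (t * (p - ε) * m) * ((1 - p) + p * exp (-t)) ^ m := by rw [← step2]; exact step1
    _ ≤ exp (t * (p - ε) * m) * exp ((m:ℝ) * (-(t * p) + t ^ 2 / 8)) :=
        mul_le_mul_of_nonneg_left step3 (exp_pos _).le
    _ = exp (-2 * ε ^ 2 * m) := by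
        rw [← Real.exp_add]
        congr 1
        rw [htdef]
        ring

/-- For any `ε ∈ (0, p₀)` with `n(ε) = ⌈(p₀-ε)m⌉ > n` and `m - n(ε) < l`,
`P(E₁, E₃) ≥ (1 - e^{-2ε²m})(1 - 2^{n-n(ε)})(1 - 2^{m-n(ε)-l})`. -/
theorem PE1E3_lower_bound (m n l : ℕ) (hm : 0 < m) (hn : 0 < n) (hl : 0 < l)
    (p₀ : ℝ) (hp₀ : 0 < p₀) (hp₁ : p₀ < 1) (ε : ℝ) (hε : 0 < ε) (hεp : ε < p₀)
    (nε : ℕ) (hnε : nε = ⌈(p₀ - ε) * m⌉₊)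
    (h1 : n < nε) (h2 : (m : ℤ) - (nε : ℤ) < (l : ℤ)) :
    (1 - Real.exp (-2 * ε ^ 2 * m)) * (1 - (2 : ℝ) ^ ((n : ℤ) - (nε : ℤ)))
        * (1 - (2 : ℝ) ^ ((m : ℤ) - (nε : ℤ) - (l : ℤ)))
      ≤ PE1E3 m n l p₀ := by
  have hq0 : (0:ℝ) ≤ 1 - p₀ := by linarith
  set A : ℝ := (2 : ℝ) ^ ((n : ℤ) - (nε : ℤ)) with hAdef
  set B : ℝ := (2 : ℝ) ^ ((m : ℤ) - (nε : ℤ) - (l : ℤ)) with hBdef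
  have hA : A ≤ 1/2 := by
    rw [hAdef]
    calc (2:ℝ) ^ ((n : ℤ) - (nε : ℤ)) ≤ (2:ℝ) ^ (-1 : ℤ) :=
          zpow_le_zpow_right₀ one_le_two (by omega)
      _ = 1/2 := by norm_num
  have hB : B ≤ 1/2 := by
    rw [hBdef]
    calc (2:ℝ) ^ ((m : ℤ) - (nε : ℤ) - (l : ℤ)) ≤ (2:ℝ) ^ (-1 : ℤ) :=
          zpow_le_zpow_right₀ one_le_two (by omega)
      _ = 1/2 := by norm_num
  have hA0 : 0 ≤ 1 - A := by linarith
  have hB0 : 0 ≤ 1 - B := by linarith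
  -- nε ≤ m
  have hnεm : nε ≤ m := by
    rw [hnε]
    apply Nat.ceil_le.2
    calc (p₀ - ε) * m ≤ 1 * m := by
          apply mul_le_mul_of_nonneg_right (by linarith) (by positivity)
      _ = (m : ℝ) := by ring
  -- m - l ≤ nε (in ℕ)
  have hml : m - l ≤ nε := by omega
  -- Subset of index sets
  have hsub : Finset.Icc nε m ⊆ Finset.Icc (max n (m - l)) m := by
    intro i hi
    simp only [Finset.mem_Icc] at *
    omega
  -- All terms are nonneg
  have hterm_nonneg : ∀ i ∈ Finset.Icc (max n (m - l)) m,
      0 ≤ (m.choose i : ℝ) * p₀ ^ i * (1 - p₀) ^ (m - i) * Prk i n * PrkStar l (m - i) := by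
    intro i hi
    simp only [Finset.mem_Icc, max_le_iff] at hi
    have hPrk : 0 ≤ Prk i n := by
      apply Finset.prod_nonneg
      intro j hj
      have hj' := Finset.mem_range.1 hj
      have : ((j:ℤ) - (i:ℤ)) ≤ 0 := by omega
      have := zpow_le_one_of_nonpos₀ (one_le_two (α := ℝ)) this
      linarith
    have hPrkStar : 0 ≤ PrkStar l (m - i) := by
      apply Finset.prod_nonneg
      intro j hj
      have hj' := Finset.mem_range.1 hj
      have hjl : j ≤ l := by omega
      have h2l : (2:ℝ) ^ j ≤ 2 ^ l := pow_le_pow_right₀ one_le_two hjl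
      have hD : (1:ℝ) < 2 ^ l := by
        have : (2:ℝ) ^ 0 < 2 ^ l := pow_lt_pow_right₀ one_lt_two hl
        simpa using this
      apply div_nonneg (by linarith) (by linarith)
    have : (0:ℝ) ≤ (m.choose i : ℝ) * p₀ ^ i * (1 - p₀) ^ (m - i) := by positivity
    positivity
  -- Pointwise lower bound on Icc nε m
  have hpoint : ∀ i ∈ Finset.Icc nε m,
      (m.choose i : ℝ) * p₀ ^ i * (1 - p₀) ^ (m - i) * ((1 - A) * (1 - B))
        ≤ (m.choose i : ℝ) * p₀ ^ i * (1 - p₀) ^ (m - i) * Prk i n * PrkStar l (m - i) := by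
    intro i hi
    simp only [Finset.mem_Icc] at hi
    have hni : n ≤ i := by omega
    have hPrk : 1 - A ≤ Prk i n := by
      refine le_trans ?_ (Prk_ge i n hni)
      have : (2:ℝ) ^ ((n:ℤ) - (i:ℤ)) ≤ A := by
        rw [hAdef]
        exact zpow_le_zpow_right₀ one_le_two (by omega)
      linarith
    have hkl : m - i ≤ l := by omega
    have hPrkStar : 1 - B ≤ PrkStar l (m - i) := by
      refine le_trans ?_ (PrkStar_ge l (m - i) hl hkl)
      have : (2:ℝ) ^ (((m - i : ℕ):ℤ) - (l:ℤ)) ≤ B := by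
        rw [hBdef]
        apply zpow_le_zpow_right₀ one_le_two
        have : ((m - i : ℕ) : ℤ) = (m : ℤ) - (i : ℤ) := by omega
        omega
      linarith
    have hPrk0 : 0 ≤ Prk i n := by linarith
    have hmul : (1 - A) * (1 - B) ≤ Prk i n * PrkStar l (m - i) :=
      mul_le_mul hPrk hPrkStar hB0 hPrk0
    have hc : (0:ℝ) ≤ (m.choose i : ℝ) * p₀ ^ i * (1 - p₀) ^ (m - i) := by positivity
    calc (m.choose i : ℝ) * p₀ ^ i * (1 - p₀) ^ (m - i) * ((1 - A) * (1 - B))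
        ≤ (m.choose i : ℝ) * p₀ ^ i * (1 - p₀) ^ (m - i) * (Prk i n * PrkStar l (m - i)) :=
          mul_le_mul_of_nonneg_left hmul hc
      _ = (m.choose i : ℝ) * p₀ ^ i * (1 - p₀) ^ (m - i) * Prk i n * PrkStar l (m - i) := by
          ring
  -- Binomial identities
  have htotal : ∑ i ∈ Finset.range (m + 1), (m.choose i : ℝ) * p₀ ^ i * (1 - p₀) ^ (m - i)
      = 1 := by
    have := add_pow p₀ (1 - p₀) m
    have h1' : (p₀ + (1 - p₀)) ^ m = (1:ℝ) := by norm_num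
    rw [h1'] at this
    calc ∑ i ∈ Finset.range (m + 1), (m.choose i : ℝ) * p₀ ^ i * (1 - p₀) ^ (m - i)
        = ∑ i ∈ Finset.range (m + 1), p₀ ^ i * (1 - p₀) ^ (m - i) * (m.choose i : ℝ) := by
          apply Finset.sum_congr rfl
          intro i _
          ring
      _ = 1 := this.symm
  have hIccsum : ∑ i ∈ Finset.Icc nε m, (m.choose i : ℝ) * p₀ ^ i * (1 - p₀) ^ (m - i)
      = 1 - ∑ i ∈ Finset.range nε, (m.choose i : ℝ) * p₀ ^ i * (1 - p₀) ^ (m - i) := by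
    rw [← Finset.Ico_add_one_right_eq_Icc, Finset.sum_Ico_eq_sub _ (by omega), htotal]
  -- Chernoff bound
  have hcher : ∑ i ∈ Finset.range nε, (m.choose i : ℝ) * p₀ ^ i * (1 - p₀) ^ (m - i)
      ≤ Real.exp (-2 * ε ^ 2 * m) := by
    apply chernoff m nε p₀ ε hp₀.le hp₁.le hε (by omega)
    intro i hi
    rw [hnε] at hi
    have := (Nat.lt_ceil).1 hi
    linarith
  -- Assemble
  have main : (1 - Real.exp (-2 * ε ^ 2 * m)) * ((1 - A) * (1 - B)) ≤ PE1E3 m n l p₀ := by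
    calc (1 - Real.exp (-2 * ε ^ 2 * m)) * ((1 - A) * (1 - B))
        ≤ (∑ i ∈ Finset.Icc nε m, (m.choose i : ℝ) * p₀ ^ i * (1 - p₀) ^ (m - i))
            * ((1 - A) * (1 - B)) := by
          apply mul_le_mul_of_nonneg_right _ (by positivity)
          rw [hIccsum]
          linarith
      _ = ∑ i ∈ Finset.Icc nε m,
            (m.choose i : ℝ) * p₀ ^ i * (1 - p₀) ^ (m - i) * ((1 - A) * (1 - B)) := by
          rw [Finset.sum_mul]
      _ ≤ ∑ i ∈ Finset.Icc nε m,
            (m.choose i : ℝ) * p₀ ^ i * (1 - p₀) ^ (m - i) * Prk i n * PrkStar l (m - i) :=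
          Finset.sum_le_sum hpoint
      _ ≤ PE1E3 m n l p₀ := by
          unfold PE1E3
          exact Finset.sum_le_sum_of_subset_of_nonneg hsub fun i hi _ => hterm_nonneg i hi
  calc (1 - Real.exp (-2 * ε ^ 2 * m)) * (1 - A) * (1 - B)
      = (1 - Real.exp (-2 * ε ^ 2 * m)) * ((1 - A) * (1 - B)) := by ring
    _ ≤ PE1E3 m n l p₀ := main
end

section
/- Let m ≥ n and m - i ≤ l. Suppose each of m received symbols is independently correct with probability p_0; correct symbols have uniformly random rows in a rank-n structure, and incorrect symbols have independent uniform nonzero error patterns in F_2^l. Then P(E_1, E_3) = Σ_{i=max(n, m-l)}^{m} C(m,i) p_0^i (1-p_0)^{m-i} · P_rk(i, n) · P*_rk(l, m-i), where P_rk(i,n) = ∏_{j=0}^{n-1}(1 - 2^{j-i}) and P*_rk(l, k) = ∏_{j=0}^{k-1} (2^l - 2^j)/(2^l - 1). -/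
open Module Submodule Matrix

lemma spanRank_iff {ι : Type*} [Fintype ι] {n : ℕ} (a : ι → Fin n → ZMod 2) :
    Module.finrank (ZMod 2) (Submodule.span (ZMod 2) (Set.range a)) = n ↔
    LinearIndependent (ZMod 2) (fun k : Fin n => fun j : ι => a j k) := by
  classical
  let M : Matrix ι (Fin n) (ZMod 2) := Matrix.of a
  have h1 : M.rank = Module.finrank (ZMod 2) (Submodule.span (ZMod 2) (Set.range a)) :=
    M.rank_eq_finrank_span_row
  have h2 : M.rank = Module.finrank (ZMod 2) (Submodule.span (ZMod 2) (Set.range Mᵀ)) :=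
    M.rank_eq_finrank_span_cols
  rw [linearIndependent_iff_card_eq_finrank_span]
  have h3 : (fun k : Fin n => fun j : ι => a j k) = Mᵀ := rfl
  rw [h3, Set.finrank, ← h2, h1, Fintype.card_fin, eq_comm]

lemma card_li' {ι V : Type*} [Fintype ι] [AddCommGroup V] [Module (ZMod 2) V] [Finite V]
    (h : Fintype.card ι ≤ Module.finrank (ZMod 2) V) :
    Nat.card {e : ι → V // LinearIndependent (ZMod 2) e} =
      ∏ j ∈ Finset.range (Fintype.card ι), (2 ^ (Module.finrank (ZMod 2) V) - 2 ^ j) := by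
  classical
  have e1 : {e : ι → V // LinearIndependent (ZMod 2) e} ≃
      {e : Fin (Fintype.card ι) → V // LinearIndependent (ZMod 2) e} :=
    Equiv.subtypeEquiv (Equiv.arrowCongr (Fintype.equivFin ι).symm (Equiv.refl _)).symm
      (fun e => (linearIndependent_equiv (Fintype.equivFin ι).symm).symm)
  rw [Nat.card_congr e1, card_linearIndependent h]
  have h2 : Fintype.card (ZMod 2) = 2 := by simp [ZMod.card]
  rw [h2]
  exact Fin.prod_univ_eq_prod_range (fun j => 2 ^ Module.finrank (ZMod 2) V - 2 ^ j) _

lemma card_li {ι : Type*} [Fintype ι] (l : ℕ) (h : Fintype.card ι ≤ l) :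
    Nat.card {e : ι → Fin l → ZMod 2 // LinearIndependent (ZMod 2) e} =
      ∏ j ∈ Finset.range (Fintype.card ι), (2 ^ l - 2 ^ j) := by
  have hf : Module.finrank (ZMod 2) (Fin l → ZMod 2) = l := by
    simp [Module.finrank_fintype_fun_eq_card]
  rw [card_li' (by rw [hf]; exact h), hf]

lemma card_li_zero {ι : Type*} [Fintype ι] (l : ℕ) (h : l < Fintype.card ι) :
    Nat.card {e : ι → Fin l → ZMod 2 // LinearIndependent (ZMod 2) e} = 0 := by
  rw [Nat.card_eq_zero]
  left
  rw [isEmpty_subtype]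
  intro e he
  have := he.fintype_card_le_finrank
  rw [Module.finrank_fintype_fun_eq_card, Fintype.card_fin] at this
  omega

lemma card_span {ι : Type*} [Fintype ι] (n : ℕ) (h : n ≤ Fintype.card ι) :
    Nat.card {a : ι → Fin n → ZMod 2 //
        Module.finrank (ZMod 2) (Submodule.span (ZMod 2) (Set.range a)) = n} =
      ∏ j ∈ Finset.range n, (2 ^ (Fintype.card ι) - 2 ^ j) := by
  classical
  have e1 : {a : ι → Fin n → ZMod 2 //
        Module.finrank (ZMod 2) (Submodule.span (ZMod 2) (Set.range a)) = n} ≃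
      {b : Fin n → ι → ZMod 2 // LinearIndependent (ZMod 2) b} :=
    Equiv.subtypeEquiv (Equiv.piComm (fun (_ : ι) (_ : Fin n) => ZMod 2))
      (fun a => spanRank_iff a)
  have hf : Module.finrank (ZMod 2) (ι → ZMod 2) = Fintype.card ι := by
    simp [Module.finrank_fintype_fun_eq_card]
  rw [Nat.card_congr e1, card_li' (by simp [hf, h]), hf, Fintype.card_fin]

lemma card_span_zero {ι : Type*} [Fintype ι] (n : ℕ) (h : Fintype.card ι < n) :
    Nat.card {a : ι → Fin n → ZMod 2 //
        Module.finrank (ZMod 2) (Submodule.span (ZMod 2) (Set.range a)) = n} = 0 := by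
  rw [Nat.card_eq_zero]
  left
  rw [isEmpty_subtype]
  intro a ha
  have := finrank_range_le_card (R := ZMod 2) a
  rw [Set.finrank, ha] at this
  omega

lemma sum_indicator_card {α : Type*} [Fintype α] (p : α → Prop) [DecidablePred p] :
    ∑ x : α, (if p x then (1 : ℝ) else 0) = (Nat.card {x // p x} : ℝ) := by
  rw [Finset.sum_boole]
  congr 1
  rw [Nat.card_eq_fintype_card, Fintype.card_subtype]

open Classical in
lemma inner_eq (m n l : ℕ) (p₀ : ℝ) (c : Fin m → Bool) :
    (∑ a : Fin m → (Fin n → ZMod 2), ∑ e : Fin m → (Fin l → ZMod 2),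
      (if (Module.finrank (ZMod 2)
              (Submodule.span (ZMod 2) (Set.range (fun j : {j : Fin m // c j = true} => a j))) = n
            ∧ LinearIndependent (ZMod 2) (fun j : {j : Fin m // c j = false} => e j))
        then ∏ i : Fin m,
          (if c i then p₀ * (if e i = 0 then (1 : ℝ) else 0) / 2 ^ n
            else (1 - p₀) * (if e i = 0 then (0 : ℝ) else 1) / (2 ^ n * ((2 : ℝ) ^ l - 1)))
        else 0))
    = (Nat.card {x : {j : Fin m // c j = true} → Fin n → ZMod 2 //
          Module.finrank (ZMod 2) (Submodule.span (ZMod 2) (Set.range x)) = n} : ℝ)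
      * ((2 : ℝ) ^ n) ^ (m - Fintype.card {j : Fin m // c j = true})
      * (p₀ / 2 ^ n) ^ (Fintype.card {j : Fin m // c j = true})
      * ((1 - p₀) / (2 ^ n * ((2 : ℝ) ^ l - 1))) ^ (m - Fintype.card {j : Fin m // c j = true})
      * (Nat.card {y : {j : Fin m // ¬ c j = true} → Fin l → ZMod 2 //
          LinearIndependent (ZMod 2) y} : ℝ) := by
  classical
  set T := {j : Fin m // c j = true}
  set F := {j : Fin m // ¬ c j = true}
  set i := Fintype.card T with hi
  have hcardF : Fintype.card F = m - i := by
    rw [hi, Fintype.card_subtype_compl, Fintype.card_fin]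
  -- replace the `c j = false` subtype by `¬ c j = true`
  have hQ : ∀ e : Fin m → (Fin l → ZMod 2),
      LinearIndependent (ZMod 2) (fun j : {j : Fin m // c j = false} => e j) ↔
      LinearIndependent (ZMod 2) (fun j : F => e j) := by
    intro e
    exact (linearIndependent_equiv' (Equiv.subtypeEquivRight (fun j => by simp)) rfl)
  set V := (Fin n → ZMod 2)
  set Vl := (Fin l → ZMod 2)
  set P : (Fin m → V) → Prop := fun a =>
    Module.finrank (ZMod 2)
      (Submodule.span (ZMod 2) (Set.range (fun j : T => a j))) = n with hP
  set wt : Vl → ℝ := fun v => p₀ * (if v = 0 then (1 : ℝ) else 0) / 2 ^ n with hwt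
  set wf : Vl → ℝ := fun v =>
    (1 - p₀) * (if v = 0 then (0 : ℝ) else 1) / (2 ^ n * ((2 : ℝ) ^ l - 1)) with hwf
  have step1 : ∀ (a : Fin m → V) (e : Fin m → Vl),
      (if (P a ∧ LinearIndependent (ZMod 2) (fun j : {j : Fin m // c j = false} => e j))
        then ∏ i : Fin m, (if c i then wt (e i) else wf (e i)) else 0)
      = (if P a then (1 : ℝ) else 0) *
        (if LinearIndependent (ZMod 2) (fun j : F => e j)
          then (∏ j : T, wt (e j)) * (∏ j : F, wf (e j)) else 0) := by
    intro a e
    rw [hQ e]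
    by_cases h1 : P a
    · by_cases h2 : LinearIndependent (ZMod 2) (fun j : F => e j)
      · rw [if_pos ⟨h1, h2⟩, if_pos h1, if_pos h2, one_mul,
          ← Fintype.prod_subtype_mul_prod_subtype (fun j => c j = true)
            (fun i => if c i then wt (e i) else wf (e i))]
        congr 1
        · exact Fintype.prod_congr _ _ (fun j => by rw [if_pos j.2])
        · exact Fintype.prod_congr _ _ (fun j => by rw [if_neg j.2])
      · rw [if_neg (fun hh => h2 hh.2), if_neg h2, mul_zero]
    · rw [if_neg (fun hh => h1 hh.1), if_neg h1, zero_mul]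
  rw [Finset.sum_congr rfl (fun a _ => Finset.sum_congr rfl (fun e _ => step1 a e))]
  rw [← Finset.sum_mul_sum]
  -- part A : the sum over a
  have hVcard : Fintype.card V = 2 ^ n := by simp [V, ZMod.card]
  have partA : (∑ a : Fin m → V, (if P a then (1 : ℝ) else 0))
      = (Nat.card {x : T → V // Module.finrank (ZMod 2)
          (Submodule.span (ZMod 2) (Set.range x)) = n} : ℝ) * ((2 : ℝ) ^ n) ^ (m - i) := by
    rw [Fintype.sum_equiv (Equiv.piEquivPiSubtypeProd (fun j => c j = true) (fun _ => V))
      (fun a => if P a then (1 : ℝ) else 0)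
      (fun z => if Module.finrank (ZMod 2)
          (Submodule.span (ZMod 2) (Set.range z.1)) = n then (1 : ℝ) else 0)
      (fun a => if_congr Iff.rfl rfl rfl)]
    rw [Fintype.sum_prod_type]
    have : ∀ x : T → V, (∑ _y : F → V, (if Module.finrank (ZMod 2)
        (Submodule.span (ZMod 2) (Set.range x)) = n then (1 : ℝ) else 0))
        = (if Module.finrank (ZMod 2)
        (Submodule.span (ZMod 2) (Set.range x)) = n then (1 : ℝ) else 0) * ((2 : ℝ) ^ n) ^ (m - i) := by
      intro x
      rw [Finset.sum_const, Finset.card_univ, nsmul_eq_mul, Fintype.card_fun, hVcard, hcardF]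
      push_cast
      ring
    rw [Finset.sum_congr rfl (fun x _ => this x), ← Finset.sum_mul, sum_indicator_card]
  rw [partA]
  -- part E : the sum over e
  have partE : (∑ e : Fin m → Vl,
      (if LinearIndependent (ZMod 2) (fun j : F => e j)
        then (∏ j : T, wt (e j)) * (∏ j : F, wf (e j)) else 0))
      = (p₀ / 2 ^ n) ^ i * (((1 - p₀) / (2 ^ n * ((2 : ℝ) ^ l - 1))) ^ (m - i)
          * (Nat.card {y : F → Vl // LinearIndependent (ZMod 2) y} : ℝ)) := by
    rw [Fintype.sum_equiv (Equiv.piEquivPiSubtypeProd (fun j => c j = true) (fun _ => Vl))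
      (fun e => if LinearIndependent (ZMod 2) (fun j : F => e j)
        then (∏ j : T, wt (e j)) * (∏ j : F, wf (e j)) else 0)
      (fun z => (∏ j : T, wt (z.1 j)) *
        (if LinearIndependent (ZMod 2) z.2 then (∏ j : F, wf (z.2 j)) else 0))
      (fun e => by
        by_cases h2 : LinearIndependent (ZMod 2) (fun j : F => e j)
        · simp [h2, mul_assoc]; exact fun h => absurd h2 h
        · simp [h2, mul_assoc]; exact fun h => absurd h h2)]
    rw [Fintype.sum_prod_type]
    simp only [← Finset.sum_mul, ← Finset.mul_sum]
    congr 1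
    · -- sum over the true part
      have hfac : ∀ j : T, (∑ v : Vl, wt v) = p₀ / 2 ^ n := by
        intro j
        rw [hwt]
        simp only [mul_ite, mul_one, mul_zero]
        rw [← Finset.sum_div, Finset.sum_ite_eq' Finset.univ (0 : Vl) (fun _ => p₀)]
        simp
      calc (∑ x : T → Vl, ∏ j : T, wt (x j))
          = ∏ j : T, (∑ v : Vl, wt v) := by
            rw [Finset.prod_univ_sum]
            rw [← Fintype.piFinset_univ]
        _ = (p₀ / 2 ^ n) ^ i := by
            rw [Finset.prod_congr rfl (fun j _ => hfac j)]
            simp [hi, div_pow]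
    · -- sum over the false part
      have hpt : ∀ y : F → Vl,
          (if LinearIndependent (ZMod 2) y then (∏ j : F, wf (y j)) else 0)
          = ((1 - p₀) / (2 ^ n * ((2 : ℝ) ^ l - 1))) ^ (m - i) *
            (if LinearIndependent (ZMod 2) y then (1 : ℝ) else 0) := by
        intro y
        by_cases h2 : LinearIndependent (ZMod 2) y
        · rw [if_pos h2, if_pos h2, mul_one]
          have : ∀ j : F, wf (y j) = (1 - p₀) / (2 ^ n * ((2 : ℝ) ^ l - 1)) := by
            intro j
            rw [hwf]
            simp [h2.ne_zero j]
          rw [Finset.prod_congr rfl (fun j _ => this j)]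
          simp [hcardF, div_pow]
        · simp [h2]
      simp only [hpt]
      rw [← Finset.mul_sum, sum_indicator_card]
  rw [partE]
  ring

lemma sum_bool_group {m : ℕ} (g : ℕ → ℝ) :
    (∑ c : Fin m → Bool, g (Fintype.card {j : Fin m // c j = true}))
    = ∑ i ∈ Finset.range (m + 1), (m.choose i : ℝ) * g i := by
  classical
  let E : Finset (Fin m) ≃ (Fin m → Bool) :=
    { toFun := fun s j => decide (j ∈ s)
      invFun := fun c => Finset.univ.filter (fun j => c j = true)
      left_inv := fun s => by ext j; simp
      right_inv := fun c => by funext j; cases h : c j <;> simp [h] }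
  have h1 : (∑ c : Fin m → Bool, g (Fintype.card {j : Fin m // c j = true}))
      = ∑ s : Finset (Fin m), g s.card := by
    rw [← Fintype.sum_equiv E (fun s => g (Fintype.card {j : Fin m // E s j = true}))
      (fun c => g (Fintype.card {j : Fin m // c j = true})) (fun s => rfl)]
    refine Finset.sum_congr rfl (fun s _ => ?_)
    congr 1
    rw [Fintype.card_subtype]
    congr 1
    ext j
    simp only [Finset.mem_filter, Finset.mem_univ, true_and, E, Equiv.coe_fn_mk,
      decide_eq_true_eq]
  rw [h1, ← Finset.powerset_univ, Finset.sum_powerset]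
  rw [Finset.card_univ, Fintype.card_fin]
  refine Finset.sum_congr rfl (fun j hj => ?_)
  have : ∀ s ∈ Finset.powersetCard j (Finset.univ : Finset (Fin m)), g s.card = g j := by
    intro s hs
    rw [(Finset.mem_powersetCard.1 hs).2]
  rw [Finset.sum_congr rfl this, Finset.sum_const, Finset.card_powersetCard,
    Finset.card_univ, Fintype.card_fin, nsmul_eq_mul]

noncomputable def gfun (m n l : ℕ) (p₀ : ℝ) : ℕ → ℝ := fun i =>
  ((if n ≤ i then ∏ j ∈ Finset.range n, (2 ^ i - 2 ^ j) else 0 : ℕ) : ℝ)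
    * ((2 : ℝ) ^ n) ^ (m - i) * (p₀ / 2 ^ n) ^ i
    * ((1 - p₀) / (2 ^ n * ((2 : ℝ) ^ l - 1))) ^ (m - i)
    * ((if m - i ≤ l then ∏ j ∈ Finset.range (m - i), (2 ^ l - 2 ^ j) else 0 : ℕ) : ℝ)

open Classical in
/-- Each of `m` received symbols is independently correct with probability `p₀`; correct
symbols carry uniform coefficient rows in `F₂^n` (and zero error pattern), and incorrect
symbols carry independent uniform nonzero error patterns in `F₂^l`. Then the probability of
the joint event `(E₁, E₃)` — that the correct symbols contain `n` linearly independent ones,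
and the error patterns of the incorrect symbols are linearly independent — equals
`Σ_{i=max(n, m-l)}^{m} C(m,i) p₀^i (1-p₀)^{m-i} P_rk(i,n) P*_rk(l, m-i)`. -/
theorem PE1E3_formula (m n l : ℕ) (hn : 0 < n) (hl : 0 < l) (hm : n ≤ m)
    (p₀ : ℝ) (hp₀ : 0 ≤ p₀) (hp₁ : p₀ ≤ 1) :
    (∑ c : Fin m → Bool, ∑ a : Fin m → (Fin n → ZMod 2), ∑ e : Fin m → (Fin l → ZMod 2),
      (if (Module.finrank (ZMod 2)
              (Submodule.span (ZMod 2) (Set.range (fun j : {j : Fin m // c j = true} => a j))) = n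
            ∧ LinearIndependent (ZMod 2) (fun j : {j : Fin m // c j = false} => e j))
        then ∏ i : Fin m,
          (if c i then p₀ * (if e i = 0 then (1 : ℝ) else 0) / 2 ^ n
            else (1 - p₀) * (if e i = 0 then (0 : ℝ) else 1) / (2 ^ n * ((2 : ℝ) ^ l - 1)))
        else 0))
    = ∑ i ∈ Finset.Icc (max n (m - l)) m,
        (m.choose i : ℝ) * p₀ ^ i * (1 - p₀) ^ (m - i)
          * (∏ j ∈ Finset.range n, (1 - (2 : ℝ) ^ ((j : ℤ) - (i : ℤ))))
          * (∏ j ∈ Finset.range (m - i), ((2 : ℝ) ^ l - 2 ^ j) / ((2 : ℝ) ^ l - 1)) := by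
  classical
  have key : ∀ c : Fin m → Bool,
      (∑ a : Fin m → (Fin n → ZMod 2), ∑ e : Fin m → (Fin l → ZMod 2),
      (if (Module.finrank (ZMod 2)
              (Submodule.span (ZMod 2) (Set.range (fun j : {j : Fin m // c j = true} => a j))) = n
            ∧ LinearIndependent (ZMod 2) (fun j : {j : Fin m // c j = false} => e j))
        then ∏ i : Fin m,
          (if c i then p₀ * (if e i = 0 then (1 : ℝ) else 0) / 2 ^ n
            else (1 - p₀) * (if e i = 0 then (0 : ℝ) else 1) / (2 ^ n * ((2 : ℝ) ^ l - 1)))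
        else 0))
      = (gfun m n l p₀) (Fintype.card {j : Fin m // c j = true}) := by
    intro c
    rw [inner_eq m n l p₀ c]
    set i := Fintype.card {j : Fin m // c j = true} with hidef
    have hcardF : Fintype.card {j : Fin m // ¬ c j = true} = m - i := by
      rw [hidef, Fintype.card_subtype_compl, Fintype.card_fin]
    have hA' : (Nat.card {x : {j : Fin m // c j = true} → Fin n → ZMod 2 //
          Module.finrank (ZMod 2) (Submodule.span (ZMod 2) (Set.range x)) = n} : ℝ)
        = ((if n ≤ i then ∏ j ∈ Finset.range n, (2 ^ i - 2 ^ j) else 0 : ℕ) : ℝ) := by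
      by_cases h : n ≤ i
      · rw [if_pos h, card_span _ h]
      · rw [if_neg h, card_span_zero _ (lt_of_not_ge h)]
    have hB' : (Nat.card {y : {j : Fin m // ¬ c j = true} → Fin l → ZMod 2 //
          LinearIndependent (ZMod 2) y} : ℝ)
        = ((if m - i ≤ l then ∏ j ∈ Finset.range (m - i), (2 ^ l - 2 ^ j) else 0 : ℕ) : ℝ) := by
      by_cases h : m - i ≤ l
      · rw [if_pos h, card_li _ (by rw [hcardF]; exact h), hcardF]
      · rw [if_neg h, card_li_zero _ (by rw [hcardF]; omega), Nat.cast_zero]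
    rw [hA', hB']
    rfl
  rw [Finset.sum_congr rfl (fun c _ => key c), sum_bool_group (gfun m n l p₀)]
  have h2l : ((2 : ℝ) ^ l - 1) ≠ 0 := by
    have : (1 : ℝ) < 2 ^ l := one_lt_pow₀ (by norm_num) (by omega)
    linarith
  have hsub : Finset.Icc (max n (m - l)) m ⊆ Finset.range (m + 1) := by
    intro x hx
    simp only [Finset.mem_Icc] at hx
    simp only [Finset.mem_range]
    omega
  have hzero : ∀ x ∈ Finset.range (m + 1), x ∉ Finset.Icc (max n (m - l)) m →
      (m.choose x : ℝ) * (gfun m n l p₀) x = 0 := by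
    intro x hx hnx
    simp only [Finset.mem_range] at hx
    have hcases : x < n ∨ l < m - x := by
      by_contra hc
      push_neg at hc
      exact hnx (Finset.mem_Icc.2 ⟨max_le (by omega) (by omega), by omega⟩)
    unfold gfun
    rcases hcases with h | h
    · rw [if_neg (show ¬ n ≤ x by omega)]
      simp
    · rw [if_neg (show ¬ m - x ≤ l by omega)]
      simp
  rw [← Finset.sum_subset hsub hzero]
  refine Finset.sum_congr rfl (fun i hi => ?_)
  simp only [Finset.mem_Icc, max_le_iff] at hi
  obtain ⟨⟨h1, h2⟩, h3⟩ := hi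
  have h4 : m - i ≤ l := by omega
  unfold gfun
  rw [if_pos h1, if_pos h4]
  have cA : ((∏ j ∈ Finset.range n, (2 ^ i - 2 ^ j) : ℕ) : ℝ)
      = ∏ j ∈ Finset.range n, ((2 : ℝ) ^ i - 2 ^ j) := by
    rw [Nat.cast_prod]
    refine Finset.prod_congr rfl (fun j hj => ?_)
    have hj' : (2 : ℕ) ^ j ≤ 2 ^ i :=
      Nat.pow_le_pow_right (by norm_num) (le_trans (Finset.mem_range.1 hj).le h1)
    rw [Nat.cast_sub hj']
    push_cast
    ring
  have cB : ((∏ j ∈ Finset.range (m - i), (2 ^ l - 2 ^ j) : ℕ) : ℝ)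
      = ∏ j ∈ Finset.range (m - i), ((2 : ℝ) ^ l - 2 ^ j) := by
    rw [Nat.cast_prod]
    refine Finset.prod_congr rfl (fun j hj => ?_)
    have hj' : (2 : ℕ) ^ j ≤ 2 ^ l :=
      Nat.pow_le_pow_right (by norm_num) (by
        have := Finset.mem_range.1 hj
        omega)
    rw [Nat.cast_sub hj']
    push_cast
    ring
  rw [cA, cB]
  have hprodA : (∏ j ∈ Finset.range n, (1 - (2 : ℝ) ^ ((j : ℤ) - (i : ℤ))))
      = (∏ j ∈ Finset.range n, ((2 : ℝ) ^ i - 2 ^ j)) / ((2 : ℝ) ^ i) ^ n := by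
    have h2i : ((2 : ℝ) ^ i) ≠ 0 := pow_ne_zero _ (by norm_num)
    have hc : ((2 : ℝ) ^ i) ^ n = ∏ _j ∈ Finset.range n, (2 : ℝ) ^ i := by
      rw [Finset.prod_const, Finset.card_range]
    rw [hc, ← Finset.prod_div_distrib]
    refine Finset.prod_congr rfl (fun j hj => ?_)
    rw [zpow_sub₀ (two_ne_zero), zpow_natCast, zpow_natCast, sub_div, div_self h2i]
  have hprodB : (∏ j ∈ Finset.range (m - i), (((2 : ℝ) ^ l - 2 ^ j) / ((2 : ℝ) ^ l - 1)))
      = (∏ j ∈ Finset.range (m - i), ((2 : ℝ) ^ l - 2 ^ j)) / ((2 : ℝ) ^ l - 1) ^ (m - i) := by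
    rw [Finset.prod_div_distrib, Finset.prod_const, Finset.card_range]
  rw [hprodA, hprodB, div_pow, div_pow, mul_pow]
  have hn0 : ((2 : ℝ) ^ n) ≠ 0 := pow_ne_zero _ (by norm_num)
  have h2i : ((2 : ℝ) ^ i) ≠ 0 := pow_ne_zero _ (by norm_num)
  field_simp
  ring
end
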